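/- Define the 3-periodic bicomplex sequence BCV_n := V_n + i·V_{n+1} + j·V_{n+2} + ij·V_{n+3}. Then for all n, 7·BC_n = Ĥ·2^{n+1} - BCV_n, where Ĥ = 1 + 2i + 4j + 8ij. -/

import Mathlib

/-!
The characteristic polynomial of `J` factors as `x³ - x² - x - 2 = (x - 2)(x² + x + 1)`, so
`7·J_n = 2^(n+1) - V_n`, where the 3-periodic `V` is the contribution of the primitive cube roots
of unity: both sides satisfy the recurrence of `J` and agree for `n = 0, 1, 2`. The bicomplex
identity is this scalar identity read off componentwise, the components of `Ĥ·2^(n+1)` being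
`2^(n+1+k)` for `k = 0, 1, 2, 3`.
-/

@[ext]
structure Bicomplex (R : Type) where
  a : R
  b : R
  c : R
  d : R

namespace Bicomplex
variable {R : Type} [CommRing R]

instance : Add (Bicomplex R) := ⟨fun w v => ⟨w.a + v.a, w.b + v.b, w.c + v.c, w.d + v.d⟩⟩
instance : Neg (Bicomplex R) := ⟨fun w => ⟨-w.a, -w.b, -w.c, -w.d⟩⟩
instance : Zero (Bicomplex R) := ⟨⟨0, 0, 0, 0⟩⟩
instance : One (Bicomplex R) := ⟨⟨1, 0, 0, 0⟩⟩
instance : Mul (Bicomplex R) :=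
  ⟨fun w v =>
    ⟨w.a * v.a - w.b * v.b - w.c * v.c + w.d * v.d,
     w.a * v.b + w.b * v.a - w.c * v.d - w.d * v.c,
     w.a * v.c - w.b * v.d + w.c * v.a - w.d * v.b,
     w.a * v.d + w.b * v.c + w.c * v.b + w.d * v.a⟩⟩

@[simp] theorem add_a (w v : Bicomplex R) : (w + v).a = w.a + v.a := rfl
@[simp] theorem add_b (w v : Bicomplex R) : (w + v).b = w.b + v.b := rfl
@[simp] theorem add_c (w v : Bicomplex R) : (w + v).c = w.c + v.c := rfl
@[simp] theorem add_d (w v : Bicomplex R) : (w + v).d = w.d + v.d := rfl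
@[simp] theorem neg_a (w : Bicomplex R) : (-w).a = -w.a := rfl
@[simp] theorem neg_b (w : Bicomplex R) : (-w).b = -w.b := rfl
@[simp] theorem neg_c (w : Bicomplex R) : (-w).c = -w.c := rfl
@[simp] theorem neg_d (w : Bicomplex R) : (-w).d = -w.d := rfl
@[simp] theorem zero_a : (0 : Bicomplex R).a = 0 := rfl
@[simp] theorem zero_b : (0 : Bicomplex R).b = 0 := rfl
@[simp] theorem zero_c : (0 : Bicomplex R).c = 0 := rfl
@[simp] theorem zero_d : (0 : Bicomplex R).d = 0 := rfl
@[simp] theorem one_a : (1 : Bicomplex R).a = 1 := rfl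
@[simp] theorem one_b : (1 : Bicomplex R).b = 0 := rfl
@[simp] theorem one_c : (1 : Bicomplex R).c = 0 := rfl
@[simp] theorem one_d : (1 : Bicomplex R).d = 0 := rfl
@[simp] theorem mul_a (w v : Bicomplex R) :
    (w * v).a = w.a * v.a - w.b * v.b - w.c * v.c + w.d * v.d := rfl
@[simp] theorem mul_b (w v : Bicomplex R) :
    (w * v).b = w.a * v.b + w.b * v.a - w.c * v.d - w.d * v.c := rfl
@[simp] theorem mul_c (w v : Bicomplex R) :
    (w * v).c = w.a * v.c - w.b * v.d + w.c * v.a - w.d * v.b := rfl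
@[simp] theorem mul_d (w v : Bicomplex R) :
    (w * v).d = w.a * v.d + w.b * v.c + w.c * v.b + w.d * v.a := rfl

instance : CommRing (Bicomplex R) where
  add_assoc w v u := by ext <;> simp <;> ring
  zero_add w := by ext <;> simp
  add_zero w := by ext <;> simp
  add_comm w v := by ext <;> simp <;> ring
  neg_add_cancel w := by ext <;> simp
  left_distrib w v u := by ext <;> simp <;> ring
  right_distrib w v u := by ext <;> simp <;> ring
  zero_mul w := by ext <;> simp
  mul_zero w := by ext <;> simp
  mul_assoc w v u := by ext <;> simp <;> ring
  one_mul w := by ext <;> simp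
  mul_one w := by ext <;> simp
  mul_comm w v := by ext <;> simp <;> ring
  nsmul := nsmulRec
  zsmul := zsmulRec

end Bicomplex

def J3 : ℕ → ℤ
  | 0 => 0
  | 1 => 1
  | 2 => 1
  | (n + 3) => J3 (n + 2) + J3 (n + 1) + 2 * J3 n

def V3 (n : ℕ) : ℤ := if n % 3 = 0 then 2 else if n % 3 = 1 then -3 else 1

/-- The bicomplex third-order Jacobsthal quaternion `J_n + i·J_{n+1} + j·J_{n+2} + ij·J_{n+3}`. -/
def BCJ (n : ℕ) : Bicomplex ℤ := ⟨J3 n, J3 (n + 1), J3 (n + 2), J3 (n + 3)⟩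

/-- The 3-periodic bicomplex sequence `V_n + i·V_{n+1} + j·V_{n+2} + ij·V_{n+3}`. -/
def BCV (n : ℕ) : Bicomplex ℤ := ⟨V3 n, V3 (n + 1), V3 (n + 2), V3 (n + 3)⟩

/-- `Ĥ = 1 + 2i + 4j + 8ij`. -/
def Hhat : Bicomplex ℤ := ⟨1, 2, 4, 8⟩

theorem V3_add_three (n : ℕ) : V3 (n + 3) = V3 (n + 2) + V3 (n + 1) + 2 * V3 n := by
  unfold V3
  have := Nat.mod_lt n (by norm_num : 0 < 3)
  interval_cases h : n % 3 <;> simp [Nat.add_mod, h]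

theorem seven_mul_J3_add_V3 (n : ℕ) : 7 * J3 n + V3 n = 2 ^ (n + 1) := by
  induction n using J3.induct with
  | case1 | case2 | case3 => decide
  | case4 n ih₂ ih₁ ih₀ =>
    show 7 * J3 (n + 3) + V3 (n + 3) = 2 ^ (n + 3 + 1)
    rw [J3, V3_add_three]
    linear_combination ih₂ + ih₁ + 2 * ih₀

namespace Bicomplex
variable {R : Type} [CommRing R]

theorem natCast_mk (m : ℕ) : (m : Bicomplex R) = ⟨m, 0, 0, 0⟩ := by
  induction m with
  | zero => ext <;> simp
  | succ m ih => ext <;> simp [ih]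

theorem natCast_mul (m : ℕ) (w : Bicomplex R) :
    (m : Bicomplex R) * w = ⟨m * w.a, m * w.b, m * w.c, m * w.d⟩ := by
  ext <;> simp [natCast_mk]

end Bicomplex

theorem binet_BCJ (n : ℕ) : 7 * BCJ n = Hhat * 2 ^ (n + 1) - BCV n := by
  have hJ (k : ℕ) : 7 * J3 (n + k) + V3 (n + k) = 2 ^ (n + 1) * 2 ^ k := by
    rw [seven_mul_J3_add_V3, ← pow_add]; ring_nf
  have h7 : (7 : Bicomplex ℤ) = ((7 : ℕ) : Bicomplex ℤ) := by norm_cast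
  have h2 : (2 : Bicomplex ℤ) ^ (n + 1) = ((2 ^ (n + 1) : ℕ) : Bicomplex ℤ) := by norm_cast
  rw [eq_sub_iff_add_eq, mul_comm Hhat, h7, h2, Bicomplex.natCast_mul, Bicomplex.natCast_mul]
  ext <;> push_cast [BCJ, BCV, Hhat]
  exacts [hJ 0, hJ 1, hJ 2, hJ 3]
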